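/- Let T > 0 and let g, φ : [0, T] → ℝ be continuous with g(t) ≥ 0 and φ(t) ≥ 0 for all t ∈ [0, T]. Suppose the function t ↦ g(t)² is differentiable on [0, T] and satisfies d/dt ( g(t)² ) ≤ 2 φ(t) g(t) for all t ∈ [0, T]. Then g(t) ≤ g(0) + ∫₀ᵗ φ(s) ds for all t ∈ [0, T]. -/

import Mathlib

/-!
Dividing `(g²)' ≤ 2φg` by `2g` is illegal where `g` vanishes, so one works with the regularisation
`√(g² + δ)`, `δ > 0`, instead: its right derivative is `(g²)' / (2√(g² + δ)) ≤ φ|g| / √(g² + δ) ≤ φ`,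
so `√(g(t)² + δ) ≤ √(g(0)² + δ) + ∫₀ᵗ φ`. Letting `δ = ε² → 0` gives the claim.
-/

open Set MeasureTheory intervalIntegral

section SqrtGronwall

variable {g g' φ : ℝ → ℝ} {a b : ℝ}

lemma sqrt_sq_add_sub_le_integral {δ : ℝ} (hab : a ≤ b) (hδ : 0 < δ)
    (hcont : ContinuousOn (fun x => g x ^ 2) (Icc a b))
    (hderiv : ∀ x ∈ Ioo a b, HasDerivWithinAt (fun x => g x ^ 2) (g' x) (Ioi x) x)
    (hφint : IntegrableOn φ (Icc a b)) (hφ0 : ∀ x ∈ Ioo a b, 0 ≤ φ x)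
    (hineq : ∀ x ∈ Ioo a b, g' x ≤ 2 * φ x * g x) :
    √(g b ^ 2 + δ) - √(g a ^ 2 + δ) ≤ ∫ x in a..b, φ x := by
  have hpos : ∀ x, 0 < g x ^ 2 + δ := fun x => by positivity
  refine sub_le_integral_of_hasDeriv_right_of_le hab
    ((hcont.add continuousOn_const).sqrt) (fun x hx => ((hderiv x hx).add_const δ).sqrt
      (hpos x).ne') hφint fun x hx => ?_
  have habs : |g x| ≤ √(g x ^ 2 + δ) := Real.abs_le_sqrt (by linarith)
  rw [div_le_iff₀ (by positivity)]
  calc g' x ≤ 2 * φ x * g x := hineq x hx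
    _ ≤ 2 * φ x * |g x| := mul_le_mul_of_nonneg_left (le_abs_self _) (by linarith [hφ0 x hx])
    _ ≤ φ x * (2 * √(g x ^ 2 + δ)) := by nlinarith [hφ0 x hx]

lemma le_add_integral_of_deriv_sq_le (hab : a ≤ b) (hga : 0 ≤ g a)
    (hcont : ContinuousOn (fun x => g x ^ 2) (Icc a b))
    (hderiv : ∀ x ∈ Ioo a b, HasDerivWithinAt (fun x => g x ^ 2) (g' x) (Ioi x) x)
    (hφint : IntegrableOn φ (Icc a b)) (hφ0 : ∀ x ∈ Ioo a b, 0 ≤ φ x)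
    (hineq : ∀ x ∈ Ioo a b, g' x ≤ 2 * φ x * g x) :
    g b ≤ g a + ∫ x in a..b, φ x := by
  refine le_of_forall_pos_le_add fun ε hε => ?_
  have hreg := sqrt_sq_add_sub_le_integral (δ := ε ^ 2) hab (by positivity) hcont hderiv hφint
    hφ0 hineq
  have hb : g b ≤ √(g b ^ 2 + ε ^ 2) :=
    (le_abs_self _).trans (Real.abs_le_sqrt (by nlinarith))
  have ha : √(g a ^ 2 + ε ^ 2) ≤ g a + ε := by
    calc √(g a ^ 2 + ε ^ 2) ≤ √((g a + ε) ^ 2) := Real.sqrt_le_sqrt (by nlinarith)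
      _ = g a + ε := Real.sqrt_sq (by positivity)
  linarith

end SqrtGronwall

theorem stmt9_general (T : ℝ) (g φ : ℝ → ℝ)
    (hφ : ContinuousOn φ (Set.Icc 0 T))
    (hg0 : ∀ t ∈ Set.Icc (0:ℝ) T, 0 ≤ g t) (hφ0 : ∀ t ∈ Set.Icc (0:ℝ) T, 0 ≤ φ t)
    (hdiff : ∀ t ∈ Set.Icc (0:ℝ) T,
      DifferentiableWithinAt ℝ (fun τ => g τ ^ 2) (Set.Icc 0 T) t)
    (hineq : ∀ t ∈ Set.Icc (0:ℝ) T,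
      derivWithin (fun τ => g τ ^ 2) (Set.Icc 0 T) t ≤ 2 * φ t * g t) :
    ∀ t ∈ Set.Icc (0:ℝ) T, g t ≤ g 0 + ∫ s in (0:ℝ)..t, φ s := by
  intro t ht
  have hsub : Icc 0 t ⊆ Icc 0 T := Icc_subset_Icc_right ht.2
  have hmem : ∀ x ∈ Ioo 0 t, x ∈ Icc 0 T := fun x hx => hsub (Ioo_subset_Icc_self hx)
  refine le_add_integral_of_deriv_sq_le ht.1 (hg0 0 ⟨le_rfl, ht.1.trans ht.2⟩)
    (fun x hx => (hdiff x (hsub hx)).continuousWithinAt.mono hsub)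
    (fun x hx => ?_) ((hφ.mono hsub).integrableOn_Icc)
    (fun x hx => hφ0 x (hmem x hx)) (fun x hx => hineq x (hmem x hx))
  exact (hdiff x (hmem x hx)).hasDerivWithinAt.mono_of_mem_nhdsWithin
    (Icc_mem_nhdsGT_of_mem ⟨(hmem x hx).1, hx.2.trans_le ht.2⟩)

/-- square-root Grönwall-type comparison lemma. If `g, φ ≥ 0` are
continuous on `[0,T]`, `t ↦ g(t)²` is differentiable on `[0,T]` with
`(g²)'(t) ≤ 2 φ(t) g(t)`, then `g(t) ≤ g(0) + ∫₀ᵗ φ(s) ds` on `[0,T]`. -/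
theorem stmt9 (T : ℝ) (hT : 0 < T) (g φ : ℝ → ℝ)
    (hg : ContinuousOn g (Set.Icc 0 T)) (hφ : ContinuousOn φ (Set.Icc 0 T))
    (hg0 : ∀ t ∈ Set.Icc (0:ℝ) T, 0 ≤ g t) (hφ0 : ∀ t ∈ Set.Icc (0:ℝ) T, 0 ≤ φ t)
    (hdiff : ∀ t ∈ Set.Icc (0:ℝ) T,
      DifferentiableWithinAt ℝ (fun τ => g τ ^ 2) (Set.Icc 0 T) t)
    (hineq : ∀ t ∈ Set.Icc (0:ℝ) T,
      derivWithin (fun τ => g τ ^ 2) (Set.Icc 0 T) t ≤ 2 * φ t * g t) :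
    ∀ t ∈ Set.Icc (0:ℝ) T, g t ≤ g 0 + ∫ s in (0:ℝ)..t, φ s :=
  stmt9_general T g φ hφ hg0 hφ0 hdiff hineq
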